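/- Let 0<α<2, c>0, s(y)=c·|y|^{-(1+α)} for y≠0, and let H:ℝ→ℝ be a Schwartz function. Then there is a constant C>0 such that for all integers n≥1 and all x∈ℤ, the family y ↦ s(y/n^{1/α})·|Δ^n_{x,y}H| over y∈ℤ∖{0} is summable and (1/(2·n^{1/α}))·∑_{y∈ℤ∖{0}} s(y/n^{1/α})·|Δ^n_{x,y}H| ≤ C, uniformly in n and x. -/

import Mathlib

open MeasureTheory

/-- The long-range jump kernel `s y = c * |y| ^ (-(1+α))` (equal to `0` at `y = 0`). -/
noncomputable def sker (α c : ℝ) (y : ℝ) : ℝ := c * |y| ^ (-(1 + α))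

/-- The discrete second difference
`Δ^n_{x,y}H = H((x+y)/n^{1/α}) + H((x−y)/n^{1/α}) − 2·H(x/n^{1/α})`. -/
noncomputable def discLap (α : ℝ) (H : ℝ → ℝ) (n : ℕ) (x y : ℤ) : ℝ :=
  H (((x + y : ℤ) : ℝ) / (n : ℝ) ^ (1 / α)) +
    H (((x - y : ℤ) : ℝ) / (n : ℝ) ^ (1 / α)) -
    2 * H ((x : ℝ) / (n : ℝ) ^ (1 / α))

/-!
Since `H` and `H''` are bounded, `|Δ^n_{x,y}H| ≤ M min((y/N)², 1)` with `N = n^{1/α}`, so the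
sum is dominated by `c M ∑_y truncKernel α (y/N)`, where
`truncKernel α t = |t|^{-(1+α)} min(t², 1)`. This lattice sum is `O(N)`: the part `|y| ≤ N` is
`N^{α-1} ∑_{k ≤ N} k^{1-α}`, bounded by telescoping `k^{2-α}`, and the tail
`N^{1+α} ∑_{k > N} k^{-(1+α)}` is bounded by the integral test. The prefactor `1/(2N)` cancels
the `N`.
-/

open Real Set

theorem min_one_mul_rpow_sub_one_le_sub_rpow {p t : ℝ} (hp : 0 < p) (ht : 0 ≤ t) :
    min 1 p * (t + 1) ^ (p - 1) ≤ (t + 1) ^ p - t ^ p := by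
  have ht1 : 0 < t + 1 := by linarith
  have hsplit : (t + 1) ^ p = (t + 1) ^ (p - 1) * (t + 1) := by
    rw [← rpow_add_one ht1.ne', sub_add_cancel]
  rcases le_total p 1 with hp1 | hp1
  · have hB := rpow_one_add_le_one_add_mul_self
      (show -1 ≤ -(t + 1)⁻¹ by
        have := inv_le_one_of_one_le₀ (show 1 ≤ t + 1 by linarith); linarith) hp.le hp1
    have hbase : 1 + -(t + 1)⁻¹ = t / (t + 1) := by field_simp; ring
    rw [hbase, div_rpow ht ht1.le, div_le_iff₀ (rpow_pos_of_pos ht1 p)] at hB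
    have : (1 + p * -(t + 1)⁻¹) * (t + 1) ^ p = (t + 1) ^ p - p * (t + 1) ^ (p - 1) := by
      rw [hsplit]; field_simp; ring
    rw [min_eq_right hp1]
    linarith
  · have hmono : t ^ p ≤ (t + 1) ^ (p - 1) * t := by
      calc t ^ p = t ^ (p - 1) * t := by
            rw [← rpow_add_one' ht (by linarith), sub_add_cancel]
        _ ≤ (t + 1) ^ (p - 1) * t := by
            gcongr; linarith
    rw [min_eq_left hp1, hsplit]
    linarith

theorem sum_range_rpow_sub_one_le {p : ℝ} (hp : 0 < p) (M : ℕ) :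
    ∑ i ∈ Finset.range M, ((i : ℝ) + 1) ^ (p - 1) ≤ (M : ℝ) ^ p / min 1 p := by
  have hm : 0 < min 1 p := lt_min one_pos hp
  rw [le_div_iff₀ hm, Finset.sum_mul]
  calc ∑ i ∈ Finset.range M, ((i : ℝ) + 1) ^ (p - 1) * min 1 p
      ≤ ∑ i ∈ Finset.range M, (((i + 1 : ℕ) : ℝ) ^ p - (i : ℝ) ^ p) := by
        gcongr with i
        push_cast
        rw [mul_comm]
        exact min_one_mul_rpow_sub_one_le_sub_rpow hp i.cast_nonneg
    _ = (M : ℝ) ^ p := by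
        rw [Finset.sum_range_sub (fun i : ℕ => (i : ℝ) ^ p)]
        simp [zero_rpow hp.ne']

theorem summable_nat_add_rpow_neg_and_tsum_le {α : ℝ} (hα : 0 < α) {M : ℕ} (hM : 1 ≤ M) :
    Summable (fun n : ℕ => ((n + M + 1 : ℕ) : ℝ) ^ (-(1 + α))) ∧
      ∑' n : ℕ, ((n + M + 1 : ℕ) : ℝ) ^ (-(1 + α)) ≤ (M : ℝ) ^ (-α) / α := by
  have hM0 : (0 : ℝ) < M := by exact_mod_cast hM
  have anti : AntitoneOn (fun t : ℝ => t ^ (-(1 + α))) (Ici (M : ℝ)) := fun s hs t _ hst =>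
    rpow_le_rpow_of_nonpos (hM0.trans_le hs) hst (by linarith)
  have integrable := integrableOn_Ioi_rpow_of_lt (by linarith : -(1 + α) < -1) hM0
  have nonneg : ∀ t ∈ Ioi (M : ℝ), 0 ≤ t ^ (-(1 + α)) := fun t ht =>
    rpow_nonneg (hM0.trans ht).le _
  refine ⟨?_, ?_⟩
  · have := (anti.summable_of_integrableOn_Ioi integrable nonneg)
    exact (summable_nat_add_iff (M + 1)).mpr this |>.congr fun n => by rw [add_assoc]
  · convert anti.tsum_comp_add_le_integral M integrable nonneg using 1
    rw [integral_Ioi_rpow_of_lt (by linarith) hM0]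
    ring_nf

noncomputable def truncKernel (α t : ℝ) : ℝ := |t| ^ (-(1 + α)) * min (t ^ 2) 1

section truncKernel

variable {α : ℝ}

theorem truncKernel_nonneg (t : ℝ) : 0 ≤ truncKernel α t := by
  unfold truncKernel; positivity

theorem truncKernel_neg (t : ℝ) : truncKernel α (-t) = truncKernel α t := by
  simp [truncKernel]

theorem truncKernel_zero : truncKernel α 0 = 0 := by
  simp [truncKernel]

theorem truncKernel_le_rpow_one_sub {t : ℝ} (ht : 0 < t) : truncKernel α t ≤ t ^ (1 - α) := by
  calc truncKernel α t ≤ t ^ (-(1 + α)) * t ^ (2 : ℝ) := by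
        rw [truncKernel, abs_of_pos ht, rpow_two]
        gcongr
        exact min_le_left _ _
    _ = t ^ (1 - α) := by rw [← rpow_add ht]; ring_nf

theorem truncKernel_le_rpow_neg {t : ℝ} (ht : 0 < t) : truncKernel α t ≤ t ^ (-(1 + α)) := by
  rw [truncKernel, abs_of_pos ht]
  exact mul_le_of_le_one_right (by positivity) (min_le_right _ _)

end truncKernel

theorem summable_truncKernel_nat_and_tsum_le {α : ℝ} (hα0 : 0 < α) (hα2 : α < 2) {N : ℝ}
    (hN : 1 ≤ N) :
    Summable (fun n : ℕ => truncKernel α ((n + 1) / N)) ∧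
      ∑' n : ℕ, truncKernel α ((n + 1) / N) ≤ (4 / min 1 (2 - α) + 1 / α) * N := by
  have hN0 : 0 < N := by linarith
  set g : ℕ → ℝ := fun n => truncKernel α ((n + 1) / N)
  set M : ℕ := ⌈N⌉₊
  have hNM : N ≤ M := Nat.le_ceil N
  have hM2N : (M : ℝ) ≤ 2 * N := by linarith [Nat.ceil_lt_add_one hN0.le]
  have hM : 1 ≤ M := Nat.one_le_iff_ne_zero.mpr (by positivity)
  obtain ⟨htail_summable, htail_le⟩ := summable_nat_add_rpow_neg_and_tsum_le hα0 hM
  have htail : ∀ n, g (n + M) ≤ N ^ (1 + α) * ((n + M + 1 : ℕ) : ℝ) ^ (-(1 + α)) := by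
    intro n
    calc g (n + M) ≤ (((n + M + 1 : ℕ) : ℝ) / N) ^ (-(1 + α)) :=
          truncKernel_le_rpow_neg (by positivity) |>.trans_eq (by push_cast; ring_nf)
      _ = _ := by rw [div_rpow (by positivity) hN0.le, rpow_neg hN0.le, div_inv_eq_mul, mul_comm]
  have hnear : ∀ i, g i ≤ ((i : ℝ) + 1) ^ (1 - α) / N ^ (1 - α) := fun i => by
    rw [← div_rpow (by positivity) hN0.le]
    exact truncKernel_le_rpow_one_sub (by positivity)
  have hsummable : Summable g := (summable_nat_add_iff M).mp <|
    (htail_summable.mul_left _).of_nonneg_of_le (fun _ => truncKernel_nonneg _) htail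
  refine ⟨hsummable, ?_⟩
  rw [← hsummable.sum_add_tsum_nat_add M]
  have hnear_sum : ∑ i ∈ Finset.range M, g i ≤ 4 / min 1 (2 - α) * N := by
    calc ∑ i ∈ Finset.range M, g i
        ≤ (∑ i ∈ Finset.range M, ((i : ℝ) + 1) ^ ((2 - α) - 1)) / N ^ (1 - α) := by
          rw [show (2 - α) - 1 = 1 - α by ring, Finset.sum_div]
          exact Finset.sum_le_sum fun i _ => hnear i
      _ ≤ (M : ℝ) ^ (2 - α) / min 1 (2 - α) / N ^ (1 - α) := by
          gcongr; exact sum_range_rpow_sub_one_le (by linarith) M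
      _ ≤ (2 * N) ^ (2 - α) / min 1 (2 - α) / N ^ (1 - α) := by gcongr
      _ = 2 ^ (2 - α) / min 1 (2 - α) * N := by
          have : N ^ (2 - α) = N ^ (1 - α) * N := by
            rw [← rpow_add_one hN0.ne']; ring_nf
          rw [mul_rpow zero_le_two hN0.le, this]
          field_simp
      _ ≤ 4 / min 1 (2 - α) * N := by
          gcongr
          calc (2 : ℝ) ^ (2 - α) ≤ 2 ^ (2 : ℝ) :=
                rpow_le_rpow_of_exponent_le one_le_two (by linarith)
            _ = 4 := by norm_num
  have htail_sum : ∑' n, g (n + M) ≤ 1 / α * N := by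
    calc ∑' n, g (n + M) ≤ ∑' n, N ^ (1 + α) * ((n + M + 1 : ℕ) : ℝ) ^ (-(1 + α)) :=
          ((summable_nat_add_iff M).mpr hsummable).tsum_le_tsum htail (htail_summable.mul_left _)
      _ ≤ N ^ (1 + α) * (M ^ (-α) / α) := by
          rw [tsum_mul_left]; gcongr
      _ ≤ N ^ (1 + α) * (N ^ (-α) / α) := by
          gcongr N ^ (1 + α) * (?_ / α)
          exact rpow_le_rpow_of_nonpos hN0 hNM (by linarith)
      _ = 1 / α * N := by
          rw [mul_div_assoc', ← rpow_add hN0, add_neg_cancel_right, rpow_one]; ring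
  linarith

theorem HasSum.int_of_nat_succ_of_even {G : Type*} [AddCommGroup G] [TopologicalSpace G]
    [IsTopologicalAddGroup G] {f : ℤ → G} {a : G} (heven : ∀ n, f (-n) = f n)
    (hzero : f 0 = 0)
    (h : HasSum (fun n : ℕ => f (n + 1)) a) : HasSum f (a + a) := by
  have hnat : HasSum (fun n : ℕ => f n) a :=
    (hasSum_nat_add_iff' 1).mp (by simpa [hzero] using h)
  exact hnat.of_nat_of_neg_add_one (by simpa only [heven] using h)

theorem summable_truncKernel_int_and_tsum_le {α : ℝ} (hα0 : 0 < α) (hα2 : α < 2) {N : ℝ}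
    (hN : 1 ≤ N) :
    Summable (fun y : ℤ => truncKernel α (y / N)) ∧
      ∑' y : ℤ, truncKernel α (y / N) ≤ 2 * (4 / min 1 (2 - α) + 1 / α) * N := by
  obtain ⟨hsummable, hle⟩ := summable_truncKernel_nat_and_tsum_le hα0 hα2 hN
  have hsum := HasSum.int_of_nat_succ_of_even (f := fun y : ℤ => truncKernel α (y / N))
    (fun y => by simp only [Int.cast_neg, neg_div, truncKernel_neg]) (by simp [truncKernel_zero])
    (by simpa using hsummable.hasSum)
  exact ⟨hsum.summable, hsum.tsum_eq ▸ by linarith⟩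

theorem abs_second_diff_le_mul_sq {f : ℝ → ℝ} {C : ℝ} (hf : Differentiable ℝ f)
    (hf' : Differentiable ℝ (deriv f)) (hC : ∀ t, |deriv (deriv f) t| ≤ C) (a h : ℝ) :
    |f (a + h) + f (a - h) - 2 * f a| ≤ C * h ^ 2 := by
  have hlip : ∀ u v, |deriv f u - deriv f v| ≤ C * |u - v| := fun u v => by
    simpa only [Real.norm_eq_abs] using Convex.norm_image_sub_le_of_norm_deriv_le
      (fun x _ => hf' x) (fun x _ => (Real.norm_eq_abs _).trans_le (hC x))
      convex_univ (mem_univ v) (mem_univ u)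
  -- `f (a + h) + f (a - h) - 2 f a = φ h - φ 0` for `φ t = f (a + t) - f (a - h + t)`,
  -- whose derivative is a difference of `f'` at points `h` apart.
  have hφ : ∀ t, HasDerivAt (fun t => f (a + t) - f (a - h + t))
      (deriv f (a + t) - deriv f (a - h + t)) t := fun t =>
    (hf _).hasDerivAt.comp_const_add.sub (hf _).hasDerivAt.comp_const_add
  have hmvt := Convex.norm_image_sub_le_of_norm_hasDerivWithin_le (C := C * |h|)
    (fun t _ => (hφ t).hasDerivWithinAt)
    (fun t _ => by simpa [Real.norm_eq_abs] using hlip (a + t) (a - h + t))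
    convex_univ (mem_univ 0) (mem_univ h)
  simp only [Real.norm_eq_abs, sub_zero, add_zero, sub_add_cancel] at hmvt
  calc |f (a + h) + f (a - h) - 2 * f a| = |f (a + h) - f a - (f a - f (a - h))| := by
        ring_nf
    _ ≤ C * |h| * |h| := hmvt
    _ = C * h ^ 2 := by rw [mul_assoc, ← abs_mul, ← sq, abs_sq]

theorem abs_second_diff_le_mul_min {f : ℝ → ℝ} {C₀ C₂ : ℝ} (hf : Differentiable ℝ f)
    (hf' : Differentiable ℝ (deriv f)) (h₀ : ∀ t, |f t| ≤ C₀)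
    (h₂ : ∀ t, |deriv (deriv f) t| ≤ C₂) (a h : ℝ) :
    |f (a + h) + f (a - h) - 2 * f a| ≤ max C₂ (4 * C₀) * min (h ^ 2) 1 := by
  rcases le_total (h ^ 2) 1 with hh | hh
  · rw [min_eq_left hh]
    exact (abs_second_diff_le_mul_sq hf hf' h₂ a h).trans (by gcongr; exact le_max_left _ _)
  · rw [min_eq_right hh, mul_one]
    have := abs_add_three (f (a + h)) (f (a - h)) (-(2 * f a))
    rw [abs_neg, abs_mul, abs_two, ← sub_eq_add_neg] at this
    linarith [h₀ (a + h), h₀ (a - h), h₀ a, le_max_right C₂ (4 * C₀)]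

theorem SchwartzMap.exists_norm_iteratedDeriv_le {F : Type*} [NormedAddCommGroup F]
    [NormedSpace ℝ F] (f : SchwartzMap ℝ F) (n : ℕ) :
    ∃ C, 0 < C ∧ ∀ x, ‖iteratedDeriv n f x‖ ≤ C := by
  obtain ⟨C, hC, hf⟩ := f.decay 0 n
  exact ⟨C, hC, fun x => by simpa [norm_iteratedFDeriv_eq_norm_iteratedDeriv] using hf x⟩

theorem SchwartzMap.exists_abs_second_diff_le (H : SchwartzMap ℝ ℝ) :
    ∃ M, 0 < M ∧ ∀ a h, |H (a + h) + H (a - h) - 2 * H a| ≤ M * min (h ^ 2) 1 := by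
  obtain ⟨C₀, hC₀, h₀⟩ := H.exists_norm_iteratedDeriv_le 0
  obtain ⟨C₂, hC₂, h₂⟩ := H.exists_norm_iteratedDeriv_le 2
  have hH' : Differentiable ℝ (deriv H) := by
    simpa using (H.smooth ⊤).differentiable_iteratedDeriv 1 (by simp)
  exact ⟨max C₂ (4 * C₀), lt_max_of_lt_left hC₂,
    abs_second_diff_le_mul_min H.differentiable hH' (fun t => by simpa using h₀ t)
      (fun t => by simpa [iteratedDeriv_succ] using h₂ t)⟩

theorem sker_mul_le_mul_truncKernel {α c M D t : ℝ} (hc : 0 ≤ c)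
    (hD : D ≤ M * min (t ^ 2) 1) : sker α c t * D ≤ c * M * truncKernel α t := by
  calc sker α c t * D ≤ c * |t| ^ (-(1 + α)) * (M * min (t ^ 2) 1) := by
        unfold sker; gcongr
    _ = c * M * truncKernel α t := by unfold truncKernel; ring

/-- For `0 < α < 2`, `c > 0` and Schwartz `H`, there is `C > 0` such
that for all `n ≥ 1` and `x ∈ ℤ`, the family `y ↦ s(y/n^{1/α})·|Δ^n_{x,y}H|`
over `y ∈ ℤ ∖ {0}` is summable and
`(1/(2 n^{1/α})) ∑_{y ≠ 0} s(y/n^{1/α}) |Δ^n_{x,y}H| ≤ C`, uniformly in `n, x`. -/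
theorem discrete_generator_uniform_bound
    (α c : ℝ) (hα0 : 0 < α) (hα2 : α < 2) (hc : 0 < c)
    (H : SchwartzMap ℝ ℝ) :
    ∃ C : ℝ, 0 < C ∧ ∀ n : ℕ, 1 ≤ n → ∀ x : ℤ,
      Summable (fun y : {y : ℤ // y ≠ 0} =>
        sker α c (((y : ℤ) : ℝ) / (n : ℝ) ^ (1 / α)) * |discLap α (⇑H) n x y|) ∧
      (1 / (2 * (n : ℝ) ^ (1 / α))) *
        (∑' y : {y : ℤ // y ≠ 0},
          sker α c (((y : ℤ) : ℝ) / (n : ℝ) ^ (1 / α)) * |discLap α (⇑H) n x y|)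
        ≤ C := by
  obtain ⟨M, hM, hΔ⟩ := H.exists_abs_second_diff_le
  set K := 2 * (4 / min 1 (2 - α) + 1 / α)
  have hK : 0 < K := by have : 0 < min 1 (2 - α) := lt_min one_pos (by linarith); positivity
  refine ⟨c * M * K / 2, by positivity, fun n hn x => ?_⟩
  set N := (n : ℝ) ^ (1 / α)
  have hN : 1 ≤ N := one_le_rpow (by exact_mod_cast hn) (by positivity)
  obtain ⟨hsummable, hle⟩ := summable_truncKernel_int_and_tsum_le hα0 hα2 hN
  have hmajor : ∀ y : ℤ,
      sker α c (y / N) * |discLap α H n x y| ≤ c * M * truncKernel α (y / N) :=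
    fun y => sker_mul_le_mul_truncKernel hc.le <| by
      simpa [discLap, N, add_div, sub_div] using hΔ (x / N) (y / N)
  have hnonneg : ∀ y : {y : ℤ // y ≠ 0},
      0 ≤ sker α c ((y : ℤ) / N) * |discLap α H n x y| :=
    fun y => by unfold sker; positivity
  have hsummable' := (hsummable.mul_left (c * M)).subtype {y | y ≠ 0}
  have hF := hsummable'.of_nonneg_of_le hnonneg (fun y => hmajor y)
  refine ⟨hF, ?_⟩
  have htsum : ∑' y : {y : ℤ // y ≠ 0}, sker α c ((y : ℤ) / N) * |discLap α H n x y|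
      ≤ c * M * (K * N) :=
    calc _ ≤ ∑' y : {y : ℤ // y ≠ 0}, c * M * truncKernel α ((y : ℤ) / N) :=
          hF.tsum_le_tsum (fun y => hmajor y) hsummable'
      _ ≤ ∑' y : ℤ, c * M * truncKernel α (y / N) :=
          (hsummable.mul_left _).tsum_subtype_le _ _ fun y => by
            have := truncKernel_nonneg (α := α) (y / N); positivity
      _ ≤ c * M * (K * N) := by rw [tsum_mul_left]; gcongr
  calc _ ≤ 1 / (2 * N) * (c * M * (K * N)) := by gcongr
    _ = c * M * K / 2 := by field_simp
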